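/- arXiv:2305.14028 — 7 statements merged into one kernel-verified Lean document; each statement's English description precedes it below -/
import Mathlib

section
/- Let F ⊆ ℤ^d be finite, let v_0, …, v_{n−1} ∈ ℤ^d be arbitrary, and let s_0, …, s_{n−1} be n distinct points of ℤ^k such that S = {s_0, …, s_{n−1}} tiles ℤ^k by translations. Set X = {(v_j, s_j) : j = 0, …, n−1} ⊆ ℤ^{d+k} and F' = (F × {0}^k) + X (this sum is direct since the s_j are distinct). If F is an aperiodic translational tile of ℤ^d, then F' is an aperiodic translational tile of ℤ^{d+k}. -/
open scoped Pointwise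
/-- `F` tiles by translations along `A`: the translates `F + a`, `a ∈ A`, partition the
group, i.e. every element is in exactly one translate. -/
def TilesZ {α : Type*} [AddCommGroup α] (F A : Set α) : Prop :=
  ∀ x : α, ∃! a, a ∈ A ∧ x - a ∈ F

/-- `A` is a periodic set: it is invariant under every element of some finite-index
subgroup. -/
def IsPeriodicZ {α : Type*} [AddCommGroup α] (A : Set α) : Prop :=
  ∃ Λ : AddSubgroup α, Λ.FiniteIndex ∧ ∀ l ∈ Λ, (fun a => a + l) '' A = A

/-- `F` is an aperiodic translational tile: it admits a tiling, but no periodic one. -/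
def IsAperiodicTile {α : Type*} [AddCommGroup α] (F : Set α) : Prop :=
  (∃ A, TilesZ F A) ∧ ∀ A, TilesZ F A → ¬ IsPeriodicZ A

/-!
Given a tiling `A` of `ℤ^d` by `F` and a tiling `T` of `ℤ^k` by `S`, the set `A × T` is a
tiling by `F'`: the `ℤ^k`-coordinate of a point picks the translate `s_j + t` of `S` containing
it, and then the `ℤ^d`-coordinate shifted by `v_j` picks the translate of `F`.
Conversely, any tiling `A'` by `F'` cuts the slice `ℤ^d × {0}` in translates of `F`, which
yields a tiling of `ℤ^d` by `F`; a period lattice `Λ'` of `A'` gives the period lattice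
`{l | (l, 0) ∈ Λ'}` of that slice tiling, which still has finite index.
-/

open Set

theorem AddSubgroup.finiteIndex_comap {G H : Type*} [AddGroup G] [AddGroup H] (f : G →+ H)
    (Λ : AddSubgroup H) [Λ.FiniteIndex] : (Λ.comap f).FiniteIndex :=
  ⟨by
    rw [AddSubgroup.index_comap]
    exact AddSubgroup.FiniteIndex.index_ne_zero (H := Λ.addSubgroupOf f.range)⟩

theorem isPeriodicZ_iff {α : Type*} [AddCommGroup α] {A : Set α} :
    IsPeriodicZ A ↔ ∃ Λ : AddSubgroup α, Λ.FiniteIndex ∧ ∀ l ∈ Λ, ∀ a, a + l ∈ A ↔ a ∈ A := by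
  refine exists_congr fun Λ => and_congr_right fun _ => forall₂_congr fun l _ => ⟨?_, ?_⟩
  · intro h a
    conv_lhs => rw [← h]
    exact (add_left_injective l).mem_set_image
  · intro h
    ext x
    refine ⟨?_, fun hx => ⟨x - l, (h _).1 (by simpa using hx), sub_add_cancel x l⟩⟩
    rintro ⟨a, ha, rfl⟩
    exact (h a).2 ha

section Shear

variable {G H ι : Type*} [AddCommGroup G] [AddCommGroup H]
  {F : Set G} {v : ι → G} {s : ι → H}

theorem mem_prod_zero_add_range_iff {p : G × H} :
    p ∈ F ×ˢ ({0} : Set H) + range (fun j => (v j, s j)) ↔ ∃ j, p.1 - v j ∈ F ∧ p.2 = s j := by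
  constructor
  · rintro ⟨q, ⟨hq₁, hq₂⟩, _, ⟨j, rfl⟩, rfl⟩
    rw [mem_singleton_iff] at hq₂
    exact ⟨j, by simpa using hq₁, by simp [hq₂]⟩
  · rintro ⟨j, hj, hp⟩
    exact ⟨(p.1 - v j, 0), ⟨hj, rfl⟩, (v j, s j), ⟨j, rfl⟩, Prod.ext (by simp) (by simp [hp])⟩

theorem TilesZ.prod_zero_add_range {A : Set G} {T : Set H} (hA : TilesZ F A)
    (hT : TilesZ (range s) T) (hs : Function.Injective s) :
    TilesZ (F ×ˢ ({0} : Set H) + range (fun j => (v j, s j))) (A ×ˢ T) := by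
  rintro ⟨x, y⟩
  obtain ⟨t₀, ⟨ht₀, j₀, hj₀⟩, ht₀_unique⟩ := hT y
  obtain ⟨a₀, ⟨ha₀, hxa₀⟩, ha₀_unique⟩ := hA (x - v j₀)
  refine ⟨(a₀, t₀), ⟨⟨ha₀, ht₀⟩, mem_prod_zero_add_range_iff.2 ⟨j₀, ?_, hj₀.symm⟩⟩, ?_⟩
  · simpa [sub_right_comm] using hxa₀
  rintro ⟨a, t⟩ ⟨⟨ha, ht⟩, hmem⟩
  obtain ⟨j, hxa, hyt⟩ := mem_prod_zero_add_range_iff.1 hmem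
  obtain rfl : t = t₀ := ht₀_unique t ⟨ht, j, hyt.symm⟩
  obtain rfl : j = j₀ := hs (hyt.symm.trans hj₀.symm)
  obtain rfl : a = a₀ := ha₀_unique a ⟨ha, by simpa [sub_right_comm] using hxa⟩
  rfl

variable (v s) in
/-- The translates `F' + (a, t)`, `(a, t) ∈ A'`, that meet `G × {0}`, recorded by the
translation of `F` they cut out there. -/
def zeroSlice (A' : Set (G × H)) : Set G :=
  {b | ∃ j, (b - v j, -s j) ∈ A'}

theorem TilesZ.zeroSlice {A' : Set (G × H)}
    (hA' : TilesZ (F ×ˢ ({0} : Set H) + range (fun j => (v j, s j))) A')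
    (hs : Function.Injective s) : TilesZ F (zeroSlice v s A') := by
  intro x
  obtain ⟨⟨a₀, t₀⟩, ⟨ha₀, hmem⟩, ha₀_unique⟩ := hA' (x, 0)
  obtain ⟨j₀, hxa₀, ht₀⟩ := mem_prod_zero_add_range_iff.1 hmem
  have ht₀ : t₀ = -s j₀ := by simpa [neg_eq_iff_eq_neg] using ht₀
  subst ht₀
  refine ⟨a₀ + v j₀, ⟨⟨j₀, by simpa using ha₀⟩, by simpa [sub_sub] using hxa₀⟩, ?_⟩
  rintro b ⟨⟨j, hb⟩, hxb⟩
  have hpair := ha₀_unique (b - v j, -s j)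
    ⟨hb, mem_prod_zero_add_range_iff.2 ⟨j, by simpa [sub_sub] using hxb, by simp⟩⟩
  simp only [Prod.mk.injEq, neg_inj] at hpair
  obtain rfl : j = j₀ := hs hpair.2
  rw [← hpair.1, sub_add_cancel]

theorem IsPeriodicZ.zeroSlice {A' : Set (G × H)} (hA' : IsPeriodicZ A') :
    IsPeriodicZ (zeroSlice v s A') := by
  obtain ⟨Λ', _, hΛ'⟩ := isPeriodicZ_iff.1 hA'
  refine isPeriodicZ_iff.2 ⟨Λ'.comap (AddMonoidHom.inl G H), Λ'.finiteIndex_comap _, ?_⟩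
  intro l hl b
  refine exists_congr fun j => ?_
  have : (b + l - v j, -s j) = (b - v j, -s j) + (l, 0) := by ext <;> simp [sub_add_eq_add_sub]
  rw [this]
  exact hΛ' _ hl _

end Shear

theorem aperiodicity_preserving_operation_general {d k n : ℕ}
    (F : Set (Fin d → ℤ))
    (v : Fin n → (Fin d → ℤ)) (s : Fin n → (Fin k → ℤ)) (hs : Function.Injective s)
    (hS : ∃ T : Set (Fin k → ℤ), TilesZ (Set.range s) T)
    (X : Set ((Fin d → ℤ) × (Fin k → ℤ))) (hX : X = Set.range fun j => (v j, s j))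
    (F' : Set ((Fin d → ℤ) × (Fin k → ℤ)))
    (hF' : F' = (F ×ˢ ({0} : Set (Fin k → ℤ))) + X)
    (hap : IsAperiodicTile F) :
    IsAperiodicTile F' := by
  subst hX hF'
  obtain ⟨⟨A, hA⟩, hA_aperiodic⟩ := hap
  obtain ⟨T, hT⟩ := hS
  exact ⟨⟨A ×ˢ T, hA.prod_zero_add_range hT hs⟩,
    fun A' hA' hper => hA_aperiodic _ (hA'.zeroSlice hs) hper.zeroSlice⟩

theorem aperiodicity_preserving_operation {d k n : ℕ}
    (F : Set (Fin d → ℤ)) (hF : F.Finite)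
    (v : Fin n → (Fin d → ℤ)) (s : Fin n → (Fin k → ℤ)) (hs : Function.Injective s)
    (hS : ∃ T : Set (Fin k → ℤ), TilesZ (Set.range s) T)
    (X : Set ((Fin d → ℤ) × (Fin k → ℤ))) (hX : X = Set.range fun j => (v j, s j))
    (F' : Set ((Fin d → ℤ) × (Fin k → ℤ)))
    (hF' : F' = (F ×ˢ ({0} : Set (Fin k → ℤ))) + X)
    (hap : IsAperiodicTile F) :
    IsAperiodicTile F' :=
  aperiodicity_preserving_operation_general F v s hs hS X hX F' hF' hap
end

section
/- Let F ⊆ ℤ^d be finite, let v_0, …, v_{n−1} ∈ ℤ^d, let s_0, …, s_{n−1} be n distinct points of ℤ^k, set X = {(v_j, s_j) : j = 0, …, n−1} and F' = (F × {0}^k) + X. If A ⊆ ℤ^d satisfies F ⊕ A = ℤ^d and T ⊆ ℤ^k satisfies S ⊕ T = ℤ^k, where S = {s_0, …, s_{n−1}}, then the Cartesian product A × T ⊆ ℤ^{d+k} satisfies F' ⊕ (A × T) = ℤ^{d+k}. -/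
open scoped Pointwise

theorem product_tiling {d k n : ℕ}
    (F : Set (Fin d → ℤ)) (hF : F.Finite)
    (v : Fin n → (Fin d → ℤ)) (s : Fin n → (Fin k → ℤ)) (hs : Function.Injective s)
    (X : Set ((Fin d → ℤ) × (Fin k → ℤ))) (hX : X = Set.range fun j => (v j, s j))
    (F' : Set ((Fin d → ℤ) × (Fin k → ℤ)))
    (hF' : F' = (F ×ˢ ({0} : Set (Fin k → ℤ))) + X)
    (A : Set (Fin d → ℤ)) (T : Set (Fin k → ℤ))
    (hA : TilesZ F A) (hT : TilesZ (Set.range s) T) :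
    TilesZ F' (A ×ˢ T) := by
  subst hX hF'
  intro x
  obtain ⟨t, ⟨htT, j, hj⟩, htu⟩ := hT x.2
  obtain ⟨a, ⟨haA, haF⟩, hau⟩ := hA (x.1 - v j)
  refine ⟨(a, t), ⟨⟨haA, htT⟩, ?_⟩, ?_⟩
  · rw [Set.mem_add]
    refine ⟨(x.1 - v j - a, 0), ⟨haF, rfl⟩, (v j, s j), ⟨j, rfl⟩, ?_⟩
    have : x.2 - t = s j := hj.symm
    apply Prod.ext <;> simp [Prod.ext_iff, ← this] <;> ring
  · rintro ⟨a', t'⟩ ⟨⟨ha'A, ht'T⟩, hmem⟩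
    rw [Set.mem_add] at hmem
    obtain ⟨⟨f, z⟩, ⟨hfF, hz⟩, q, ⟨j', hj'⟩, heq⟩ := hmem
    simp only [Set.mem_singleton_iff] at hz
    subst hz
    obtain ⟨h1, h2⟩ := Prod.ext_iff.mp heq
    subst hj'
    simp only [Prod.fst_add, Prod.snd_add, zero_add] at h1 h2
    -- h2 : s j' = (x - (a', t')).2 = x.2 - t'
    have ht' : t' = t := htu t' ⟨ht'T, ⟨j', h2.symm ▸ rfl⟩⟩
    subst ht'
    have hjj : j' = j := hs (by rw [h2]; exact hj.symm ▸ rfl)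
    subst hjj
    have ha' : a' = a := by
      apply hau
      refine ⟨ha'A, ?_⟩
      have : x.1 - v j' - a' = f := by
        have := h1
        simp only [Prod.fst_sub] at this ⊢
        linear_combination -this
      rw [this]; exact hfF
    simp [ha']
end

section
/- Let F ⊆ ℤ^d be finite, let v_0, …, v_{n−1} ∈ ℤ^d, let s_0, …, s_{n−1} be n distinct points of ℤ^k, set X = {(v_j, s_j) : j = 0, …, n−1} and F' = (F × {0}^k) + X. Suppose A' ⊆ ℤ^{d+k} satisfies F' ⊕ A' = ℤ^{d+k}. Then the set A = {a ∈ ℤ^d : (a, 0) ∈ A' + X} satisfies F ⊕ A = ℤ^d. Moreover, if A' is invariant under translation by every element of a subgroup G' of ℤ^{d+k}, then A is invariant under translation by every element of the subgroup {g ∈ ℤ^d : (g,0) ∈ G'}. -/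
open scoped Pointwise

theorem projected_tiling_and_periodicity {d k n : ℕ}
    (F : Set (Fin d → ℤ)) (hF : F.Finite)
    (v : Fin n → (Fin d → ℤ)) (s : Fin n → (Fin k → ℤ)) (hs : Function.Injective s)
    (X : Set ((Fin d → ℤ) × (Fin k → ℤ))) (hX : X = Set.range fun j => (v j, s j))
    (F' : Set ((Fin d → ℤ) × (Fin k → ℤ)))
    (hF' : F' = (F ×ˢ ({0} : Set (Fin k → ℤ))) + X)
    (A' : Set ((Fin d → ℤ) × (Fin k → ℤ))) (hA' : TilesZ F' A')
    (A : Set (Fin d → ℤ)) (hA : A = {a | (a, (0 : Fin k → ℤ)) ∈ A' + X}) :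
    TilesZ F A ∧
      ∀ G' : AddSubgroup ((Fin d → ℤ) × (Fin k → ℤ)),
        (∀ l ∈ G', (fun p => p + l) '' A' = A') →
        ∀ g : Fin d → ℤ, (g, (0 : Fin k → ℤ)) ∈ G' → (fun a => a + g) '' A = A := by
  subst hX hF' hA
  constructor
  · intro x
    obtain ⟨a', ⟨ha'A, ha'F⟩, huniq⟩ := hA' (x, 0)
    rw [Set.mem_add] at ha'F
    obtain ⟨p, hp, q, ⟨j, rfl⟩, hpq⟩ := ha'F
    obtain ⟨f, z⟩ := p
    obtain ⟨hf, hz⟩ := hp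
    simp only [Set.mem_singleton_iff] at hz
    subst hz
    have hpq1 : f + v j = x - a'.1 := congrArg Prod.fst hpq
    have hpq2 : (0 : Fin k → ℤ) + s j = 0 - a'.2 := congrArg Prod.snd hpq
    refine ⟨x - f, ⟨?_, by simpa using hf⟩, ?_⟩
    · refine Set.mem_add.mpr ⟨a', ha'A, (v j, s j), ⟨j, rfl⟩, ?_⟩
      apply Prod.ext
      · show a'.1 + v j = x - f
        linear_combination hpq1
      · show a'.2 + s j = 0
        linear_combination hpq2
    · rintro b ⟨hbA, hbF⟩
      rw [Set.mem_setOf_eq, Set.mem_add] at hbA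
      obtain ⟨b', hb'A, q, ⟨jb, rfl⟩, hb'⟩ := hbA
      have hb'eq : b' = a' := by
        apply huniq
        refine ⟨hb'A, Set.mem_add.mpr ⟨(x - b, 0), ⟨hbF, rfl⟩, (v jb, s jb), ⟨jb, rfl⟩, ?_⟩⟩
        have h1 : b'.1 + v jb = b := congrArg Prod.fst hb'
        have h2 : b'.2 + s jb = 0 := congrArg Prod.snd hb'
        apply Prod.ext
        · show x - b + v jb = x - b'.1
          linear_combination h1
        · show (0 : Fin k → ℤ) + s jb = 0 - b'.2
          linear_combination h2
      have h1 : b'.1 + v jb = b := congrArg Prod.fst hb'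
      have h2 : b'.2 + s jb = 0 := congrArg Prod.snd hb'
      rw [hb'eq] at h1 h2
      have hjj : jb = j := hs (by linear_combination h2 - hpq2)
      subst hjj
      linear_combination hpq1 - h1
  · intro G' hG' g hg
    have key : ∀ g : Fin d → ℤ, (g, (0 : Fin k → ℤ)) ∈ G' →
        ∀ a ∈ {a | (a, (0 : Fin k → ℤ)) ∈ A' + (Set.range fun j => (v j, s j))},
        a + g ∈ {a | (a, (0 : Fin k → ℤ)) ∈ A' + (Set.range fun j => (v j, s j))} := by
      intro g hg a ha
      obtain ⟨a', ha'A, q, ⟨j, rfl⟩, haeq⟩ := Set.mem_add.mp ha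
      have ha'g : a' + (g, 0) ∈ A' := by
        rw [← hG' _ hg]
        exact ⟨a', ha'A, rfl⟩
      refine Set.mem_add.mpr ⟨a' + (g, 0), ha'g, (v j, s j), ⟨j, rfl⟩, ?_⟩
      have h1 : a'.1 + v j = a := congrArg Prod.fst haeq
      have h2 : a'.2 + s j = 0 := congrArg Prod.snd haeq
      apply Prod.ext
      · show a'.1 + g + v j = a + g
        linear_combination h1
      · show a'.2 + 0 + s j = 0
        linear_combination h2
    ext b
    simp only [Set.mem_image]
    constructor
    · rintro ⟨a, haA, rfl⟩
      exact key g hg a haA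
    · intro hbA
      have hng : ((-g : Fin d → ℤ), (0 : Fin k → ℤ)) ∈ G' := by
        have := neg_mem hg
        simpa using this
      exact ⟨b + -g, key (-g) hng b hbA, by abel⟩
end

section
/- Let F ⊆ ℤ^d be a finite set with connected components C_0, C_1, …, C_m (m ≥ 1), pick points a_j ∈ C_j with a_0 = 0, and let v_0, …, v_{n−1} ∈ ℤ^d be a path with v_0 = 0, ‖v_{j+1} − v_j‖_∞ ≤ 1 for all j, such that every a_j (j = 0, …, m) occurs among v_0, …, v_{n−1}. Let X ⊆ ℤ^{d+2} consist of the points (0, j, 0) for 0 ≤ j ≤ n−1 together with the points (v_j, n−1−j, 1) for 0 ≤ j ≤ n−1. Then F' = (F × {0}²) + X is connected in ℤ^{d+2}. -/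
open scoped Pointwise

/-- Two points of `ℤ^d` are adjacent (connected) if they differ by at most `1` in every
coordinate. -/
def StepAdj {d : ℕ} (a b : Fin d → ℤ) : Prop :=
  ∀ i, |a i - b i| ≤ 1

/-- `x` and `y` are joined by a path inside `B` whose consecutive points differ by at
most `1` in every coordinate. -/
def ZConnIn {d : ℕ} (B : Set (Fin d → ℤ)) (x y : Fin d → ℤ) : Prop :=
  Relation.ReflTransGen (fun p q => p ∈ B ∧ q ∈ B ∧ StepAdj p q) x y

/-- `C` is a connected component of `F ⊆ ℤ^d`: the set of points of `F` reachable from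
some point `a ∈ F` by paths in `F`. -/
def IsComponent {d : ℕ} (F C : Set (Fin d → ℤ)) : Prop :=
  ∃ a ∈ F, C = {b | b ∈ F ∧ ZConnIn F a b}

/-- Two points of `ℤ^d × ℤ × ℤ ≅ ℤ^{d+2}` are adjacent (connected) if they differ by at
most `1` in every coordinate. -/
def StepAdjP {d : ℕ} (a b : (Fin d → ℤ) × ℤ × ℤ) : Prop :=
  (∀ i, |a.1 i - b.1 i| ≤ 1) ∧ |a.2.1 - b.2.1| ≤ 1 ∧ |a.2.2 - b.2.2| ≤ 1

/-- A set `B ⊆ ℤ^{d+2}` is connected if any two of its points are joined by a path inside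
`B` whose consecutive points differ by at most `1` in every coordinate. -/
def ZConnectedP {d : ℕ} (B : Set ((Fin d → ℤ) × ℤ × ℤ)) : Prop :=
  ∀ a ∈ B, ∀ b ∈ B,
    Relation.ReflTransGen (fun x y => x ∈ B ∧ y ∈ B ∧ StepAdjP x y) a b

open Relation

/-!
Every point of `F'` is joined to the origin. A point `(f, j, 0)` slides down its column to
`(f, 0, 0)`; a point `(f + v_j, n - 1 - j, 1)` follows the shifted path `f + v` in layer `1` back
to `(f, n - 1, 1)` and steps down to `(f, n - 1, 0)`. Thus everything reduces to joining
`(f, 0, 0)` to the origin. Within layer `0` at height `0`, `f` reaches the marked point `a_k` of its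
component, and `a_k = v_i` for some `i`; the point `(v_i, n - 1 - i, 0)` lies right below the
point `(0 + v_i, n - 1 - i, 1)` of the copy `0 + X`, whose layer-`1` path leads to `(0, n - 1, 1)`
and, stepping down there, through the column over `0` to the origin.
-/

theorem Relation.ReflTransGen.symm_of_symm {α : Type*} {r : α → α → Prop}
    (hr : ∀ ⦃x y⦄, r x y → r y x) {a b : α} (h : ReflTransGen r a b) : ReflTransGen r b a :=
  haveI : Std.Symm r := ⟨hr⟩
  Std.Symm.symm _ _ h

theorem Relation.ReflTransGen.of_succ {α : Type*} {r : α → α → Prop} {p : ℕ → α} {N : ℕ}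
    (h : ∀ k, k + 1 < N → r (p k) (p (k + 1))) {j : ℕ} (hj : j < N) :
    ReflTransGen r (p 0) (p j) := by
  induction j with
  | zero => exact .refl
  | succ k ih => exact (ih (by omega)).tail (h k hj)

section

variable {d : ℕ}

theorem StepAdj.symm {x y : Fin d → ℤ} (h : StepAdj x y) : StepAdj y x :=
  fun i => abs_sub_comm (x i) (y i) ▸ h i

theorem ZConnIn.symm {F : Set (Fin d → ℤ)} {x y : Fin d → ℤ} (h : ZConnIn F x y) :
    ZConnIn F y x :=
  h.symm_of_symm fun _ _ ⟨hp, hq, hpq⟩ => ⟨hq, hp, hpq.symm⟩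

theorem IsComponent.subset {F C : Set (Fin d → ℤ)} (hC : IsComponent F C) : C ⊆ F := by
  obtain ⟨a, -, rfl⟩ := hC
  exact fun _ hb => hb.1

theorem IsComponent.zConnIn {F C : Set (Fin d → ℤ)} (hC : IsComponent F C) {x y : Fin d → ℤ}
    (hx : x ∈ C) (hy : y ∈ C) : ZConnIn F x y := by
  obtain ⟨a, -, rfl⟩ := hC
  exact hx.2.symm.trans hy.2

theorem StepAdjP.symm {x y : (Fin d → ℤ) × ℤ × ℤ} (h : StepAdjP x y) : StepAdjP y x :=
  ⟨fun i => abs_sub_comm (x.1 i) (y.1 i) ▸ h.1 i, abs_sub_comm x.2.1 y.2.1 ▸ h.2.1,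
    abs_sub_comm x.2.2 y.2.2 ▸ h.2.2⟩

def StepAdjPIn (B : Set ((Fin d → ℤ) × ℤ × ℤ)) (x y : (Fin d → ℤ) × ℤ × ℤ) : Prop :=
  x ∈ B ∧ y ∈ B ∧ StepAdjP x y

theorem StepAdjPIn.symm {B : Set ((Fin d → ℤ) × ℤ × ℤ)} {x y : (Fin d → ℤ) × ℤ × ℤ}
    (h : StepAdjPIn B x y) : StepAdjPIn B y x :=
  ⟨h.2.1, h.1, h.2.2.symm⟩

theorem reflTransGen_stepAdjPIn_symm {B : Set ((Fin d → ℤ) × ℤ × ℤ)}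
    {x y : (Fin d → ℤ) × ℤ × ℤ} (h : ReflTransGen (StepAdjPIn B) x y) :
    ReflTransGen (StepAdjPIn B) y x :=
  h.symm_of_symm fun _ _ => StepAdjPIn.symm

def bridgeSet (n : ℕ) (v : ℕ → Fin d → ℤ) : Set ((Fin d → ℤ) × ℤ × ℤ) :=
  {p | ∃ j < n, p = (0, (j : ℤ), 0)} ∪ {p | ∃ j < n, p = (v j, (n : ℤ) - 1 - (j : ℤ), 1)}

def foldedSet (F : Set (Fin d → ℤ)) (n : ℕ) (v : ℕ → Fin d → ℤ) :
    Set ((Fin d → ℤ) × ℤ × ℤ) :=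
  (F ×ˢ ({(0, 0)} : Set (ℤ × ℤ))) + bridgeSet n v

variable {F : Set (Fin d → ℤ)} {n : ℕ} {v : ℕ → Fin d → ℤ}

theorem mem_foldedSet {p : (Fin d → ℤ) × ℤ × ℤ} :
    p ∈ foldedSet F n v ↔ (∃ f ∈ F, ∃ j < n, p = (f, (j : ℤ), 0)) ∨
      ∃ f ∈ F, ∃ j < n, p = (f + v j, (n : ℤ) - 1 - (j : ℤ), 1) := by
  simp only [foldedSet, bridgeSet, Set.mem_add, Set.mem_prod, Set.mem_singleton_iff,
    Set.mem_union, Set.mem_ofPred_eq]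
  constructor
  · rintro ⟨⟨f, y⟩, ⟨hf, rfl⟩, x, ⟨j, hj, rfl⟩ | ⟨j, hj, rfl⟩, rfl⟩
    · exact .inl ⟨f, hf, j, hj, by simp⟩
    · exact .inr ⟨f, hf, j, hj, by simp⟩
  · rintro (⟨f, hf, j, hj, rfl⟩ | ⟨f, hf, j, hj, rfl⟩)
    · exact ⟨(f, 0, 0), ⟨hf, rfl⟩, _, .inl ⟨j, hj, rfl⟩, by simp⟩
    · exact ⟨(f, 0, 0), ⟨hf, rfl⟩, _, .inr ⟨j, hj, rfl⟩, by simp⟩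

theorem mem_foldedSet_layer0 {f : Fin d → ℤ} (hf : f ∈ F) {j : ℕ} (hj : j < n) :
    (f, (j : ℤ), 0) ∈ foldedSet F n v :=
  mem_foldedSet.2 (.inl ⟨f, hf, j, hj, rfl⟩)

theorem mem_foldedSet_layer1 {f : Fin d → ℤ} (hf : f ∈ F) {j : ℕ} (hj : j < n) :
    (f + v j, (n : ℤ) - 1 - (j : ℤ), 1) ∈ foldedSet F n v :=
  mem_foldedSet.2 (.inr ⟨f, hf, j, hj, rfl⟩)

theorem ZConnIn.foldedSet_layer0 {x y : Fin d → ℤ} (h : ZConnIn F x y) {j : ℕ} (hj : j < n) :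
    ReflTransGen (StepAdjPIn (foldedSet F n v)) (x, (j : ℤ), 0) (y, (j : ℤ), 0) :=
  h.lift (fun z => (z, (j : ℤ), 0)) fun _ _ ⟨hp, hq, hpq⟩ =>
    ⟨mem_foldedSet_layer0 hp hj, mem_foldedSet_layer0 hq hj, hpq, by simp, by simp⟩

theorem foldedSet_column {f : Fin d → ℤ} (hf : f ∈ F) {j : ℕ} (hj : j < n) :
    ReflTransGen (StepAdjPIn (foldedSet F n v)) (f, 0, 0) (f, (j : ℤ), 0) := by
  refine ReflTransGen.of_succ (p := fun k : ℕ => (f, (k : ℤ), 0)) (fun k hk => ?_) hj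
  refine ⟨mem_foldedSet_layer0 hf (by omega), mem_foldedSet_layer0 hf hk, by simp, ?_, by simp⟩
  simp

theorem foldedSet_bridge (hv0 : v 0 = 0)
    (hstep : ∀ j, j + 1 < n → ∀ i, |v (j + 1) i - v j i| ≤ 1)
    {f : Fin d → ℤ} (hf : f ∈ F) {j : ℕ} (hj : j < n) :
    ReflTransGen (StepAdjPIn (foldedSet F n v)) (f, (n : ℤ) - 1, 1)
      (f + v j, (n : ℤ) - 1 - (j : ℤ), 1) := by
  have h := ReflTransGen.of_succ (r := StepAdjPIn (foldedSet F n v))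
    (p := fun k : ℕ => (f + v k, (n : ℤ) - 1 - (k : ℤ), 1)) (fun k hk => ?_) hj
  · simpa [hv0] using h
  refine ⟨mem_foldedSet_layer1 hf (by omega), mem_foldedSet_layer1 hf hk, fun i => ?_, ?_, by simp⟩
  · simpa [abs_sub_comm] using hstep k hk i
  · simp

theorem foldedSet_fold {f : Fin d → ℤ} (hf : f ∈ F) {i : ℕ} (hi : i < n) (hfi : f + v i ∈ F) :
    StepAdjPIn (foldedSet F n v) (f + v i, ((n - 1 - i : ℕ) : ℤ), 0)
      (f + v i, (n : ℤ) - 1 - (i : ℤ), 1) := by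
  refine ⟨mem_foldedSet_layer0 hfi (by omega), mem_foldedSet_layer1 hf hi, by simp, ?_, by simp⟩
  dsimp only
  rw [abs_le]
  omega

theorem foldedSet_reach_layer1 (hv0 : v 0 = 0)
    (hstep : ∀ j, j + 1 < n → ∀ i, |v (j + 1) i - v j i| ≤ 1)
    {f : Fin d → ℤ} (hf : f ∈ F) {j : ℕ} (hj : j < n) :
    ReflTransGen (StepAdjPIn (foldedSet F n v)) (f, 0, 0)
      (f + v j, (n : ℤ) - 1 - (j : ℤ), 1) := by
  have hn : 0 < n := by omega
  have hfold := foldedSet_fold (v := v) hf hn (by simpa [hv0] using hf)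
  simp only [hv0, add_zero, Nat.sub_zero, Nat.cast_zero, sub_zero] at hfold
  have htop : (((n - 1 : ℕ) : ℤ)) = (n : ℤ) - 1 := by omega
  refine (foldedSet_column hf (Nat.sub_one_lt_of_lt hn)).trans ?_
  exact (ReflTransGen.single hfold).trans (htop ▸ foldedSet_bridge hv0 hstep hf hj)

theorem foldedSet_reach_base (h0F : (0 : Fin d → ℤ) ∈ F) (hv0 : v 0 = 0)
    (hstep : ∀ j, j + 1 < n → ∀ i, |v (j + 1) i - v j i| ≤ 1)
    {i : ℕ} (hi : i < n) (hviF : v i ∈ F) {f : Fin d → ℤ} (hvif : ZConnIn F (v i) f) :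
    ReflTransGen (StepAdjPIn (foldedSet F n v)) (0, 0, 0) (f, 0, 0) := by
  have hup := foldedSet_reach_layer1 hv0 hstep h0F hi
  have hfold := foldedSet_fold h0F hi (by simpa using hviF)
  rw [zero_add] at hup hfold
  have hdown := reflTransGen_stepAdjPIn_symm
    (foldedSet_column (n := n) (v := v) hviF (j := n - 1 - i) (by omega))
  exact ((hup.tail hfold.symm).trans hdown).trans (hvif.foldedSet_layer0 (j := 0) (by omega))

theorem zConnectedP_foldedSet (h0F : (0 : Fin d → ℤ) ∈ F) (hv0 : v 0 = 0)
    (hstep : ∀ j, j + 1 < n → ∀ i, |v (j + 1) i - v j i| ≤ 1)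
    (hreach : ∀ f ∈ F, ∃ i < n, v i ∈ F ∧ ZConnIn F (v i) f) :
    ZConnectedP (foldedSet F n v) := by
  have horigin : ∀ p ∈ foldedSet F n v,
      ReflTransGen (StepAdjPIn (foldedSet F n v)) (0, 0, 0) p := by
    intro p hp
    rcases mem_foldedSet.1 hp with ⟨f, hf, j, hj, rfl⟩ | ⟨f, hf, j, hj, rfl⟩
    all_goals obtain ⟨i, hi, hviF, hvif⟩ := hreach f hf
    · exact (foldedSet_reach_base h0F hv0 hstep hi hviF hvif).trans (foldedSet_column hf hj)
    · exact (foldedSet_reach_base h0F hv0 hstep hi hviF hvif).trans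
        (foldedSet_reach_layer1 hv0 hstep hf hj)
  exact fun x hx y hy => (reflTransGen_stepAdjPIn_symm (horigin x hx)).trans (horigin y hy)

end

theorem folded_bridge_connects_components_general {d : ℕ}
    (F : Set (Fin d → ℤ))
    (m : ℕ) (C : Fin (m + 1) → Set (Fin d → ℤ))
    (hcomp : ∀ j, IsComponent F (C j)) (hcover : (⋃ j, C j) = F)
    (a : Fin (m + 1) → Fin d → ℤ) (ha : ∀ j, a j ∈ C j) (ha0 : a 0 = 0)
    (n : ℕ)
    (v : ℕ → Fin d → ℤ) (hv0 : v 0 = 0)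
    (hstep : ∀ j, j + 1 < n → ∀ i, |v (j + 1) i - v j i| ≤ 1)
    (hpath : ∀ j, ∃ i < n, a j = v i)
    (X : Set ((Fin d → ℤ) × ℤ × ℤ))
    (hX : X = {p | ∃ j < n, p = (0, (j : ℤ), 0)} ∪
      {p | ∃ j < n, p = (v j, (n : ℤ) - 1 - (j : ℤ), 1)}) :
    ZConnectedP ((F ×ˢ ({(0, 0)} : Set (ℤ × ℤ))) + X) := by
  subst hX
  refine zConnectedP_foldedSet (ha0 ▸ (hcomp 0).subset (ha 0)) hv0 hstep fun f hf => ?_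
  obtain ⟨k, hfk⟩ := Set.mem_iUnion.1 (hcover ▸ hf)
  obtain ⟨i, hi, hai⟩ := hpath k
  exact ⟨i, hi, hai ▸ (hcomp k).subset (ha k), hai ▸ (hcomp k).zConnIn (ha k) hfk⟩

theorem folded_bridge_connects_components {d : ℕ}
    (F : Set (Fin d → ℤ)) (hF : F.Finite)
    (m : ℕ) (hm : 1 ≤ m) (C : Fin (m + 1) → Set (Fin d → ℤ))
    (hcomp : ∀ j, IsComponent F (C j)) (hcover : (⋃ j, C j) = F)
    (a : Fin (m + 1) → Fin d → ℤ) (ha : ∀ j, a j ∈ C j) (ha0 : a 0 = 0)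
    (n : ℕ) (hn : 1 ≤ n)
    (v : ℕ → Fin d → ℤ) (hv0 : v 0 = 0)
    (hstep : ∀ j, j + 1 < n → ∀ i, |v (j + 1) i - v j i| ≤ 1)
    (hpath : ∀ j, ∃ i < n, a j = v i)
    (X : Set ((Fin d → ℤ) × ℤ × ℤ))
    (hX : X = {p | ∃ j < n, p = (0, (j : ℤ), 0)} ∪
      {p | ∃ j < n, p = (v j, (n : ℤ) - 1 - (j : ℤ), 1)}) :
    ZConnectedP ((F ×ˢ ({(0, 0)} : Set (ℤ × ℤ))) + X) :=
  folded_bridge_connects_components_general F m C hcomp hcover a ha ha0 n v hv0 hstep hpath X hX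
end

section
/- Let Ω ⊆ ℝ^d be a bounded measurable set of positive measure, let v_0, …, v_{n−1} ∈ ℝ^d, let s_0, …, s_{n−1} be n distinct points of ℤ^k, set X = {(v_j, s_j) : j = 0, …, n−1} ⊆ ℝ^{d+k}, S = {s_0, …, s_{n−1}}, and Ω' = (Ω × [0,1]^k) + X (a union that is disjoint up to measure zero since the s_j are distinct). Suppose S tiles ℤ^k by translations. Then Ω' tiles ℝ^{d+k} by translations if and only if Ω tiles ℝ^d by translations. -/
open MeasureTheory
open scoped ENNReal Pointwise

/-- `Ω` tiles by translations along the countable set `A`: almost every point lies in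
exactly one translate `Ω + a`, `a ∈ A`. -/
def Tiles {α : Type*} [AddCommGroup α] [MeasureSpace α] (Ω A : Set α) : Prop :=
  A.Countable ∧ ∀ᵐ x ∂(volume : Measure α), ∃! a, a ∈ A ∧ x - a ∈ Ω

private lemma aux_floor {y : ℝ} (hy : ∀ n : ℤ, y ≠ n) {m : ℤ}
    (h0 : 0 ≤ y - m) (h1 : y - m ≤ 1) : m = ⌊y⌋ := by
  have hm : (m : ℝ) ≤ y := by linarith
  have h2 : y < (m : ℝ) + 1 := by
    have hne : y ≠ ((m + 1 : ℤ) : ℝ) := hy (m + 1)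
    push_cast at hne
    have : y ≤ (m : ℝ) + 1 := by linarith
    exact lt_of_le_of_ne this hne
  have hle : m ≤ ⌊y⌋ := Int.le_floor.mpr hm
  have hlt : ⌊y⌋ < m + 1 := by
    have h3 : (⌊y⌋ : ℝ) < (m : ℝ) + 1 := lt_of_le_of_lt (Int.floor_le y) h2
    exact_mod_cast h3
  omega

private lemma aux_floor_pi {k : ℕ} {y : Fin k → ℝ} (hy : ∀ i, ∀ n : ℤ, y i ≠ n)
    (m : Fin k → ℤ) :
    (y - fun i => (m i : ℝ)) ∈ Set.Icc (0 : Fin k → ℝ) 1 ↔ (m = fun i => ⌊y i⌋) := by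
  rw [Set.mem_Icc]
  constructor
  · rintro ⟨h0, h1⟩
    funext i
    exact aux_floor (hy i) (by simpa using h0 i) (by simpa using h1 i)
  · rintro rfl
    constructor <;> intro i <;> simp only [Pi.sub_apply, Pi.zero_apply, Pi.one_apply]
    · simpa using Int.floor_le (y i)
    · have := (Int.lt_floor_add_one (y i)).le
      linarith

private lemma mem_aux {d k n : ℕ} (Ω : Set (Fin d → ℝ)) (v : Fin n → (Fin d → ℝ))
    (s : Fin n → (Fin k → ℤ)) (z : (Fin d → ℝ) × (Fin k → ℝ)) :
    z ∈ (Ω ×ˢ Set.Icc (0 : Fin k → ℝ) 1) +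
        (Set.range fun j => ((v j, fun i => ((s j i : ℝ))) : (Fin d → ℝ) × (Fin k → ℝ))) ↔
      ∃ j, z.1 - v j ∈ Ω ∧ (z.2 - fun i => (s j i : ℝ)) ∈ Set.Icc (0 : Fin k → ℝ) 1 := by
  rw [Set.mem_add]
  constructor
  · rintro ⟨p, hp, q, ⟨j, rfl⟩, rfl⟩
    exact ⟨j, by simpa using hp.1, by simpa using hp.2⟩
  · rintro ⟨j, h1, h2⟩
    refine ⟨(z.1 - v j, z.2 - fun i => (s j i : ℝ)), ⟨h1, h2⟩,
      (v j, fun i => (s j i : ℝ)), ⟨j, rfl⟩, ?_⟩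
    ext <;> simp

theorem tiling_preserving_operation {d k n : ℕ}
    (Ω : Set (Fin d → ℝ)) (hmeas : MeasurableSet Ω)
    (hbdd : Bornology.IsBounded Ω) (hpos : 0 < volume Ω)
    (v : Fin n → (Fin d → ℝ)) (s : Fin n → (Fin k → ℤ)) (hs : Function.Injective s)
    (X : Set ((Fin d → ℝ) × (Fin k → ℝ)))
    (hX : X = Set.range fun j => (v j, fun i => ((s j i : ℝ))))
    (Ω' : Set ((Fin d → ℝ) × (Fin k → ℝ)))
    (hΩ' : Ω' = (Ω ×ˢ Set.Icc (0 : Fin k → ℝ) 1) + X)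
    (hS : ∃ T : Set (Fin k → ℤ), TilesZ (Set.range s) T) :
    (∃ A' : Set ((Fin d → ℝ) × (Fin k → ℝ)), Tiles Ω' A') ↔
      (∃ A : Set (Fin d → ℝ), Tiles Ω A) := by
  have hmem : ∀ z : (Fin d → ℝ) × (Fin k → ℝ), z ∈ Ω' ↔
      ∃ j, z.1 - v j ∈ Ω ∧ (z.2 - fun i => (s j i : ℝ)) ∈ Set.Icc (0 : Fin k → ℝ) 1 := by
    intro z
    rw [hΩ', hX]
    exact mem_aux Ω v s z
  have haeZ : ∀ c : Fin k → ℝ, ∀ᵐ y : Fin k → ℝ ∂volume, ∀ i, ∀ nn : ℤ, y i - c i ≠ nn := by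
    intro c
    rw [ae_all_iff]
    intro i
    rw [ae_all_iff]
    intro nn
    have h1 : ∀ᵐ y : Fin k → ℝ ∂volume, y i ≠ (nn : ℝ) + c i := by
      rw [MeasureTheory.volume_pi]
      exact MeasureTheory.Measure.ae_eval_ne (fun _ => (volume : Measure ℝ)) i _
    filter_upwards [h1] with y hy h
    exact hy (by linarith [sub_eq_iff_eq_add.mp h])
  constructor
  · -- forward direction
    rintro ⟨A', hA'c, hA'ae⟩
    rw [MeasureTheory.Measure.volume_eq_prod] at hA'ae
    have hswap : ∀ᵐ w ∂((volume : Measure (Fin k → ℝ)).prod (volume : Measure (Fin d → ℝ))),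
        ∃! a, a ∈ A' ∧ (w.2, w.1) - a ∈ Ω' :=
      (MeasureTheory.Measure.measurePreserving_swap).quasiMeasurePreserving.ae hA'ae
    have h2 := MeasureTheory.Measure.ae_ae_of_ae_prod hswap
    have h3 : ∀ᵐ y : Fin k → ℝ ∂volume, ∀ p ∈ A', ∀ i, ∀ nn : ℤ, y i - p.2 i ≠ nn :=
      (ae_ball_iff hA'c).mpr fun p _ => haeZ p.2
    obtain ⟨y₀, hy₀P, hy₀Z⟩ := (h2.and h3).exists
    refine ⟨(fun q : (((Fin d → ℝ) × (Fin k → ℝ)) × Fin n) => q.1.1 + v q.2) ''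
      {q | q.1 ∈ A' ∧ s q.2 = fun i => ⌊y₀ i - q.1.2 i⌋}, ?_, ?_⟩
    · refine Set.Countable.image ?_ _
      exact (hA'c.prod (Set.to_countable (Set.univ : Set (Fin n)))).mono
        (fun q hq => by exact Set.mem_prod.mpr ⟨hq.1, Set.mem_univ _⟩)
    · filter_upwards [hy₀P] with x hx
      obtain ⟨p₀, ⟨hp₀A, hp₀Ω⟩, hp₀u⟩ := hx
      rw [hmem] at hp₀Ω
      obtain ⟨j, hj1, hj2⟩ := hp₀Ω
      have hyp0 : ∀ i, ∀ nn : ℤ, y₀ i - p₀.2 i ≠ nn := hy₀Z p₀ hp₀A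
      have hsj : s j = fun i => ⌊y₀ i - p₀.2 i⌋ := (aux_floor_pi hyp0 (s j)).mp hj2
      have hmemq : ((p₀, j) : ((Fin d → ℝ) × (Fin k → ℝ)) × Fin n) ∈
          {q : ((Fin d → ℝ) × (Fin k → ℝ)) × Fin n |
            q.1 ∈ A' ∧ s q.2 = fun i => ⌊y₀ i - q.1.2 i⌋} := ⟨hp₀A, hsj⟩
      refine ⟨p₀.1 + v j, ⟨Set.mem_image_of_mem _ hmemq, ?_⟩, ?_⟩
      · have he : x - (p₀.1 + v j) = (x - p₀.1) - v j := by rw [sub_add_eq_sub_sub]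
        rw [he]
        exact hj1
      · rintro c ⟨⟨q, ⟨hqA, hqfl⟩, rfl⟩, hcΩ⟩
        have hq2 : (x, y₀) - q.1 ∈ Ω' := by
          rw [hmem]
          refine ⟨q.2, ?_, ?_⟩
          · show x - q.1.1 - v q.2 ∈ Ω
            rw [sub_sub]
            exact hcΩ
          · exact (aux_floor_pi (hy₀Z q.1 hqA) (s q.2)).mpr hqfl
        have hq1 : q.1 = p₀ := hp₀u q.1 ⟨hqA, hq2⟩
        have hqj : q.2 = j := hs (by rw [hqfl, hq1, hsj])
        show q.1.1 + v q.2 = p₀.1 + v j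
        rw [hq1, hqj]
  · -- backward direction
    rintro ⟨A, hAc, hAae⟩
    obtain ⟨T, hT⟩ := hS
    refine ⟨A ×ˢ ((fun t : Fin k → ℤ => fun i => ((t i : ℝ))) '' T),
      hAc.prod ((Set.to_countable T).image _), ?_⟩
    rw [MeasureTheory.Measure.volume_eq_prod]
    have hE : ∀ j : Fin n, ∀ᵐ z ∂((volume : Measure (Fin d → ℝ)).prod
        (volume : Measure (Fin k → ℝ))), ∃! a, a ∈ A ∧ (z.1 - v j) - a ∈ Ω := by
      intro j
      apply MeasureTheory.Measure.quasiMeasurePreserving_fst.ae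
        (p := fun x => ∃! a, a ∈ A ∧ (x - v j) - a ∈ Ω)
      have h1 := (measurePreserving_add_right (volume : Measure (Fin d → ℝ))
        (-(v j))).quasiMeasurePreserving.ae hAae
      filter_upwards [h1] with x hx
      simpa [sub_eq_add_neg] using hx
    have hY : ∀ᵐ z ∂((volume : Measure (Fin d → ℝ)).prod (volume : Measure (Fin k → ℝ))),
        ∀ i, ∀ nn : ℤ, z.2 i ≠ (nn : ℝ) := by
      apply MeasureTheory.Measure.quasiMeasurePreserving_snd.ae
        (p := fun y : Fin k → ℝ => ∀ i, ∀ nn : ℤ, y i ≠ (nn : ℝ))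
      filter_upwards [haeZ 0] with y hy i nn
      simpa using hy i nn
    filter_upwards [hY, ae_all_iff.mpr hE] with z hz1 hz2
    obtain ⟨t₀, ⟨ht₀T, hmt⟩, htu⟩ := hT fun i => ⌊z.2 i⌋
    obtain ⟨j₀, hj₀⟩ := hmt
    obtain ⟨a₀, ⟨ha₀A, ha₀Ω⟩, hau⟩ := hz2 j₀
    have hsum : (fun i => (t₀ i + s j₀ i)) = fun i => ⌊z.2 i⌋ := by
      funext i
      have := congrFun hj₀ i
      simp only [Pi.sub_apply] at this
      omega
    refine ⟨(a₀, fun i => (t₀ i : ℝ)),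
      ⟨Set.mem_prod.mpr ⟨ha₀A, Set.mem_image_of_mem _ ht₀T⟩, ?_⟩, ?_⟩
    · rw [hmem]
      refine ⟨j₀, ?_, ?_⟩
      · show z.1 - a₀ - v j₀ ∈ Ω
        rw [sub_right_comm]
        exact ha₀Ω
      · show ((z.2 - fun i => (t₀ i : ℝ)) - fun i => (s j₀ i : ℝ)) ∈
          Set.Icc (0 : Fin k → ℝ) 1
        have he : ((z.2 - fun i => (t₀ i : ℝ)) - fun i => (s j₀ i : ℝ)) =
            z.2 - fun i => ((t₀ i + s j₀ i : ℤ) : ℝ) := by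
          funext i
          simp only [Pi.sub_apply]
          push_cast
          ring
        rw [he]
        exact (aux_floor_pi hz1 _).mpr hsum
    · rintro a' ⟨⟨ha'A, t, htT, ht2⟩, ha'Ω⟩
      rw [hmem] at ha'Ω
      obtain ⟨j, hj1, hj2⟩ := ha'Ω
      have hj2' : (z.2 - fun i => ((t i + s j i : ℤ) : ℝ)) ∈ Set.Icc (0 : Fin k → ℝ) 1 := by
        have he : (z.2 - fun i => ((t i + s j i : ℤ) : ℝ)) =
            ((z.2 - a'.2) - fun i => (s j i : ℝ)) := by
          funext i
          simp only [Pi.sub_apply, ← ht2]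
          push_cast
          ring
        rw [he]
        exact hj2
      have hts : (fun i => (t i + s j i)) = fun i => ⌊z.2 i⌋ :=
        (aux_floor_pi hz1 _).mp hj2'
      have hsj : ((fun i => ⌊z.2 i⌋) - t) ∈ Set.range s := by
        refine ⟨j, ?_⟩
        funext i
        have := congrFun hts i
        simp only [Pi.sub_apply]
        omega
      have htt : t = t₀ := htu t ⟨htT, hsj⟩
      have hjj : j = j₀ := by
        apply hs
        rw [hj₀]
        funext i
        have := congrFun hts i
        simp only [Pi.sub_apply]
        subst htt
        omega
      have ha1 : a'.1 = a₀ := by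
        apply hau
        refine ⟨ha'A, ?_⟩
        rw [← hjj, sub_right_comm]
        exact hj1
      ext1
      · exact ha1
      · rw [← ht2, htt]
end

section
/- Let D be a real number with D ≥ 2 and let n = ⌈D⌉ be the least integer with n ≥ D. If n is odd, then (1/2)·√( ((n+1)/n · D)² + (n−1)² ) < (4/(3√2))·D; and if n is even, then (1/2)·√( D² + n² ) < (4/(3√2))·D. -/
set_option maxHeartbeats 1000000 in
theorem distance_contraction_estimate (D : ℝ) (hD : 2 ≤ D)
    (n : ℤ) (hn : n = ⌈D⌉) :
    (Odd n →
      (1 / 2) * Real.sqrt (((n + 1) / (n : ℝ) * D) ^ 2 + ((n : ℝ) - 1) ^ 2) <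
        (4 / (3 * Real.sqrt 2)) * D) ∧
    (Even n →
      (1 / 2) * Real.sqrt (D ^ 2 + (n : ℝ) ^ 2) < (4 / (3 * Real.sqrt 2)) * D) := by
  have hs0 : (0:ℝ) < Real.sqrt 2 := by positivity
  have hs2 : Real.sqrt 2 ^ 2 = 2 := Real.sq_sqrt (by norm_num)
  have hle : D ≤ (n:ℝ) := by rw [hn]; exact Int.le_ceil D
  have hlt : (n:ℝ) < D + 1 := by rw [hn]; exact Int.ceil_lt_add_one D
  have hD0 : (0:ℝ) < D := by linarith
  have hR0 : 0 < (4 / (3 * Real.sqrt 2)) * D := by positivity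
  have hsq : ((4 / (3 * Real.sqrt 2)) * D) ^ 2 = 8 / 9 * D ^ 2 := by
    field_simp
    nlinarith [hs2]
  constructor
  · intro hodd
    have hn3 : (3:ℤ) ≤ n := by
      obtain ⟨k, hk⟩ := hodd
      have : (2:ℝ) ≤ (n:ℝ) := le_trans hD hle
      have : (2:ℤ) ≤ n := by exact_mod_cast this
      omega
    have hm3 : (3:ℝ) ≤ (n:ℝ) := by exact_mod_cast hn3
    have hm0 : (0:ℝ) < (n:ℝ) := by linarith
    have hdiv : ((n:ℝ) + 1) / (n:ℝ) ≤ 4 / 3 := by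
      rw [div_le_div_iff₀ hm0 (by norm_num)]; linarith
    have hdiv0 : 0 ≤ ((n:ℝ) + 1) / (n:ℝ) := by positivity
    have key : Real.sqrt (((n + 1) / (n : ℝ) * D) ^ 2 + ((n : ℝ) - 1) ^ 2)
        < 2 * ((4 / (3 * Real.sqrt 2)) * D) := by
      rw [show (2 * ((4 / (3 * Real.sqrt 2)) * D)) = (8 / (3 * Real.sqrt 2)) * D by ring]
      rw [Real.sqrt_lt' (by positivity)]
      have hx : (((n:ℝ) + 1) / (n:ℝ)) ^ 2 ≤ 16/9 := by nlinarith
      have h1 : ((n + 1) / (n : ℝ) * D) ^ 2 ≤ (16/9) * D ^ 2 := by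
        rw [mul_pow]; nlinarith [sq_nonneg D]
      have h2 : ((n:ℝ) - 1) ^ 2 < D ^ 2 := by nlinarith
      have h3 : ((8 / (3 * Real.sqrt 2)) * D) ^ 2 = 32 / 9 * D ^ 2 := by
        field_simp
        nlinarith [hs2]
      rw [h3]; nlinarith
    linarith
  · intro _
    have key : Real.sqrt (D ^ 2 + (n : ℝ) ^ 2) < 2 * ((4 / (3 * Real.sqrt 2)) * D) := by
      rw [show (2 * ((4 / (3 * Real.sqrt 2)) * D)) = (8 / (3 * Real.sqrt 2)) * D by ring]
      rw [Real.sqrt_lt' (by positivity)]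
      have h3 : ((8 / (3 * Real.sqrt 2)) * D) ^ 2 = 32 / 9 * D ^ 2 := by
        field_simp
        nlinarith [hs2]
      rw [h3]
      have hn32 : (n:ℝ) ≤ (3/2) * D := by linarith
      have hn0 : (0:ℝ) ≤ (n:ℝ) := by linarith
      have h4 : (n:ℝ) ^ 2 ≤ 9/4 * D ^ 2 := by nlinarith
      nlinarith
    linarith
end

section
/- Let Ω ⊆ ℝ^d be a bounded measurable set of positive measure, let v_0, …, v_{n−1} ∈ ℝ^d, let s_0, …, s_{n−1} be n distinct points of ℤ^k, set X = {(v_j, s_j) : j = 0, …, n−1} ⊆ ℝ^{d+k}, S = {s_0, …, s_{n−1}}, and Ω' = (Ω × [0,1]^k) + X. If A ⊆ ℝ^d satisfies Ω ⊕ A = ℝ^d and T ⊆ ℤ^k satisfies S ⊕ T = ℤ^k, then the Cartesian product A × T ⊆ ℝ^{d+k} satisfies Ω' ⊕ (A × T) = ℝ^{d+k}. -/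
open MeasureTheory
open scoped ENNReal Pointwise

theorem product_tiling_continuous {d k n : ℕ}
    (Ω : Set (Fin d → ℝ)) (hmeas : MeasurableSet Ω)
    (hbdd : Bornology.IsBounded Ω) (hpos : 0 < volume Ω)
    (v : Fin n → (Fin d → ℝ)) (s : Fin n → (Fin k → ℤ)) (hs : Function.Injective s)
    (X : Set ((Fin d → ℝ) × (Fin k → ℝ)))
    (hX : X = Set.range fun j => (v j, fun i => ((s j i : ℝ))))
    (Ω' : Set ((Fin d → ℝ) × (Fin k → ℝ)))
    (hΩ' : Ω' = (Ω ×ˢ Set.Icc (0 : Fin k → ℝ) 1) + X)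
    (A : Set (Fin d → ℝ)) (T : Set (Fin k → ℤ))
    (hA : Tiles Ω A) (hT : TilesZ (Set.range s) T) :
    Tiles Ω' (A ×ˢ ((fun t : Fin k → ℤ => fun i => ((t i : ℝ))) '' T)) := by
  obtain ⟨hAc, hAae⟩ := hA
  refine ⟨hAc.prod ((Set.to_countable T).image _), ?_⟩
  -- the good set in the first factor
  have hG : ∀ᵐ x : Fin d → ℝ, ∀ j : Fin n, ∃! a, a ∈ A ∧ (x - v j) - a ∈ Ω := by
    rw [MeasureTheory.ae_all_iff]
    intro j
    have h := (measurePreserving_add_right (volume : Measure (Fin d → ℝ))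
      (-(v j))).quasiMeasurePreserving.tendsto_ae.eventually hAae
    filter_upwards [h] with x hx
    simpa [sub_eq_add_neg] using hx
  -- the good set in the second factor: no integer coordinates
  have hH : ∀ᵐ y : Fin k → ℝ, ∀ i : Fin k, ∀ c : ℤ, y i ≠ (c : ℝ) := by
    rw [MeasureTheory.ae_all_iff]
    intro i
    rw [MeasureTheory.ae_all_iff]
    intro c
    rw [MeasureTheory.volume_pi]
    exact MeasureTheory.Measure.ae_eval_ne (fun _ : Fin k => (volume : Measure ℝ)) i (c : ℝ)
  rw [MeasureTheory.Measure.volume_eq_prod]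
  have key : ∀ᵐ z : (Fin d → ℝ) × (Fin k → ℝ) ∂((volume : Measure (Fin d → ℝ)).prod volume),
      (∀ j : Fin n, ∃! a, a ∈ A ∧ (z.1 - v j) - a ∈ Ω) ∧
      (∀ i : Fin k, ∀ c : ℤ, z.2 i ≠ (c : ℝ)) := by
    have h1 := (MeasureTheory.Measure.quasiMeasurePreserving_fst
      (μ := (volume : Measure (Fin d → ℝ))) (ν := (volume : Measure (Fin k → ℝ)))).tendsto_ae.eventually hG
    have h2 := (MeasureTheory.Measure.quasiMeasurePreserving_snd
      (μ := (volume : Measure (Fin d → ℝ))) (ν := (volume : Measure (Fin k → ℝ)))).tendsto_ae.eventually hH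
    filter_upwards [h1, h2] with z hz1 hz2
    exact ⟨hz1, hz2⟩
  filter_upwards [key] with z hz
  obtain ⟨hx, hy⟩ := hz
  obtain ⟨x, y⟩ := z
  simp only at hx hy
  -- the integer part of y
  set m : Fin k → ℤ := fun i => ⌊y i⌋ with hm
  -- the key characterization of the Icc-membership
  have icc_iff : ∀ (t : Fin k → ℤ) (j : Fin n),
      (y - (fun i => (t i : ℝ)) - (fun i => (s j i : ℝ)) ∈ Set.Icc (0 : Fin k → ℝ) 1)
        ↔ s j = m - t := by
    intro t j
    constructor
    · intro h
      obtain ⟨h0, h1⟩ := h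
      funext i
      have h0i : (0 : ℝ) ≤ y i - t i - s j i := by
        have := h0 i; simpa using this
      have h1i : y i - t i - s j i ≤ 1 := by
        have := h1 i; simpa using this
      have hfloor : ⌊y i⌋ = t i + s j i := by
        rw [Int.floor_eq_iff]
        constructor
        · push_cast; linarith
        · have hne : y i ≠ ((t i + s j i + 1 : ℤ) : ℝ) := hy i _
          push_cast at hne ⊢
          have : y i ≤ t i + s j i + 1 := by linarith
          rcases lt_or_eq_of_le this with h | h
          · exact h
          · exact absurd h hne
      simp only [Pi.sub_apply, hm]
      omega
    · intro h
      rw [h]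
      constructor
      · intro i
        have h1 := Int.floor_le (y i)
        simp only [Pi.sub_apply, Pi.zero_apply, hm, Int.cast_sub]
        linarith
      · intro i
        have h2 := Int.lt_floor_add_one (y i)
        simp only [Pi.sub_apply, Pi.one_apply, hm, Int.cast_sub]
        linarith
  -- unique t₀ and j₀ from the discrete tiling
  obtain ⟨t₀, ⟨ht₀T, j₀, hj₀⟩, ht₀u⟩ := hT m
  -- hj₀ : s j₀ = m - t₀
  obtain ⟨a₀, ⟨ha₀A, ha₀Ω⟩, ha₀u⟩ := hx j₀
  refine ⟨(a₀, fun i => (t₀ i : ℝ)), ⟨⟨ha₀A, ⟨t₀, ht₀T, rfl⟩⟩, ?_⟩, ?_⟩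
  · -- membership in Ω'
    rw [hΩ', Set.mem_add]
    refine ⟨((x - a₀) - v j₀, y - (fun i => (t₀ i : ℝ)) - (fun i => (s j₀ i : ℝ))),
      ⟨?_, (icc_iff t₀ j₀).2 hj₀⟩, (v j₀, fun i => (s j₀ i : ℝ)), by rw [hX]; exact ⟨j₀, rfl⟩, ?_⟩
    · simpa [sub_right_comm] using ha₀Ω
    · ext <;> simp [Prod.ext_iff] <;> abel
  · -- uniqueness
    rintro ⟨a, b⟩ ⟨⟨haA, t, htT, rfl⟩, hmem⟩
    rw [hΩ', Set.mem_add] at hmem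
    obtain ⟨w, hw, χ, hχ, hsum⟩ := hmem
    rw [hX] at hχ
    obtain ⟨j, rfl⟩ := hχ
    obtain ⟨hw1, hw2⟩ := hw
    -- components of the sum equation
    have hs1 : w.1 + v j = x - a := congrArg Prod.fst hsum
    have hs2 : w.2 + (fun i => (s j i : ℝ)) = y - fun i => (t i : ℝ) :=
      congrArg Prod.snd hsum
    have hw2' : y - (fun i => (t i : ℝ)) - (fun i => (s j i : ℝ)) ∈
        Set.Icc (0 : Fin k → ℝ) 1 := by
      have : w.2 = y - (fun i => (t i : ℝ)) - (fun i => (s j i : ℝ)) := by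
        rw [← hs2]; abel
      rwa [← this]
    have hsj : s j = m - t := (icc_iff t j).1 hw2'
    have ht : t = t₀ := ht₀u t ⟨htT, j, hsj⟩
    subst ht
    have hj : j = j₀ := hs (by rw [hsj, hj₀])
    subst hj
    have hw1' : (x - v j) - a ∈ Ω := by
      have : w.1 = x - a - v j := by rw [← hs1]; abel
      rw [this] at hw1
      rwa [sub_right_comm] at hw1
    have ha : a = a₀ := ha₀u a ⟨haA, hw1'⟩
    rw [ha]
end
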